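/- arXiv:1910.05630 — 2 statements merged into one kernel-verified Lean document; each statement's English description precedes it below -/
import Mathlib

section
/- Let M > 0, |Q| < M, Υ(r) = 1 − 2M/r + Q²/r², r_P = (3M+√(9M²−8Q²))/2. Define f(r) = w₂ r^{-2} ∫_{r_P}^r s²/Υ(s) ds for r ≥ r_P with constant w₂ > 0. Then f'(r) ≥ (w₂/(rΥ(r)))·(2r_P − r) for all r ≥ r_P; in particular f'(r) > 0 for r_P ≤ r < 2r_P. -/
open MeasureTheory intervalIntegral Set

theorem stmt_8 (M Q w₂ : ℝ) (hM : 0 < M) (hQ : |Q| < M) (hw : 0 < w₂) :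
    let rP := (3 * M + Real.sqrt (9 * M ^ 2 - 8 * Q ^ 2)) / 2
    let Υ := fun s : ℝ => 1 - 2 * M / s + Q ^ 2 / s ^ 2
    let f := fun r : ℝ => w₂ * r ^ (-2 : ℤ) * ∫ s in rP..r, s ^ 2 / Υ s
    (∀ r, rP ≤ r → deriv f r ≥ (w₂ / (r * Υ r)) * (2 * rP - r)) ∧
    (∀ r, rP ≤ r → r < 2 * rP → 0 < deriv f r) := by
  intro rP Υ f
  have hQ2 : Q ^ 2 < M ^ 2 := by
    have := abs_lt.mp hQ
    nlinarith [this.1, this.2]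
  set D := Real.sqrt (9 * M ^ 2 - 8 * Q ^ 2) with hD
  have hDnn : 0 ≤ D := Real.sqrt_nonneg _
  have hD2 : D ^ 2 = 9 * M ^ 2 - 8 * Q ^ 2 := Real.sq_sqrt (by nlinarith)
  have hDM : M < D := by nlinarith
  have hrPdef : rP = (3 * M + D) / 2 := rfl
  have hrP2M : 2 * M < rP := by rw [hrPdef]; linarith
  have hrP0 : 0 < rP := by linarith
  have hrPeq : rP ^ 2 - 3 * M * rP + 2 * Q ^ 2 = 0 := by rw [hrPdef]; nlinarith [hD2]
  -- positivity of the quadratic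
  have hP : ∀ s : ℝ, 2 * M < s → 0 < s ^ 2 - 2 * M * s + Q ^ 2 := by
    intro s hs
    nlinarith [sq_nonneg Q, sq_nonneg (s - 2 * M)]
  have hΥeq : ∀ s : ℝ, s ≠ 0 → Υ s = (s ^ 2 - 2 * M * s + Q ^ 2) / s ^ 2 := by
    intro s hs; simp only [Υ]; field_simp
  have hΥpos : ∀ s : ℝ, 2 * M < s → 0 < Υ s := by
    intro s hs
    have hs0 : (0:ℝ) < s := by linarith
    rw [hΥeq s hs0.ne']
    exact div_pos (hP s hs) (by positivity)
  have hgeq : ∀ s : ℝ, 2 * M < s → s ^ 2 / Υ s = s ^ 4 / (s ^ 2 - 2 * M * s + Q ^ 2) := by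
    intro s hs
    have hs0 : (0:ℝ) < s := by linarith
    rw [hΥeq s hs0.ne', div_div_eq_mul_div]
    ring_nf
  -- continuity of the integrand on Ioi (2M)
  have hcg : ContinuousOn (fun s : ℝ => s ^ 2 / Υ s) (Ioi (2 * M)) := by
    apply ContinuousOn.div (by fun_prop)
    · apply ContinuousOn.add
      · apply ContinuousOn.sub continuousOn_const
        exact ContinuousOn.div continuousOn_const (by fun_prop)
          (fun s hs => by have h1 : 2*M < s := hs
                          have h0 : (0:ℝ) < s := by linarith
                          exact h0.ne')
      · exact ContinuousOn.div continuousOn_const (by fun_prop)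
          (fun s hs => by have h1 : 2*M < s := hs
                          have h0 : (0:ℝ) < s := by linarith
                          exact pow_ne_zero _ h0.ne')
    · exact fun s hs => (hΥpos s hs).ne'
  have hsub : ∀ r : ℝ, rP ≤ r → Icc rP r ⊆ Ioi (2 * M) := by
    intro r hr s hs; exact lt_of_lt_of_le hrP2M hs.1
  have hint : ∀ r : ℝ, rP ≤ r → IntervalIntegrable (fun s : ℝ => s ^ 2 / Υ s) volume rP r := by
    intro r hr
    exact (hcg.mono (by rw [uIcc_of_le hr]; exact hsub r hr)).intervalIntegrable
  -- monotonicity of h = s^4 / P s on Ici rP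
  have hmono : MonotoneOn (fun s : ℝ => s ^ 4 / (s ^ 2 - 2 * M * s + Q ^ 2)) (Ici rP) := by
    apply monotoneOn_of_deriv_nonneg (convex_Ici rP)
    · apply ContinuousOn.div (by fun_prop) (by fun_prop)
      exact fun s hs => (hP s (lt_of_lt_of_le hrP2M hs)).ne'
    · rw [interior_Ici]
      apply DifferentiableOn.div (by fun_prop) (by fun_prop)
      exact fun s hs => (hP s (lt_trans hrP2M hs)).ne'
    · rw [interior_Ici]
      intro s hs
      have hs' : rP < s := hs
      have hPs := hP s (lt_trans hrP2M hs')
      have hds : HasDerivAt (fun s : ℝ => s ^ 4 / (s ^ 2 - 2 * M * s + Q ^ 2))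
          ((4 * s ^ 3 * (s ^ 2 - 2 * M * s + Q ^ 2) - s ^ 4 * (2 * s - 2 * M)) /
            (s ^ 2 - 2 * M * s + Q ^ 2) ^ 2) s := by
        have h1 : HasDerivAt (fun s : ℝ => s ^ 4) (4 * s ^ 3) s := by
          simpa using hasDerivAt_pow 4 s
        have h2 : HasDerivAt (fun s : ℝ => s ^ 2 - 2 * M * s + Q ^ 2) (2 * s - 2 * M) s := by
          have := ((hasDerivAt_pow 2 s).sub ((hasDerivAt_id s).const_mul (2*M))).add_const (Q^2)
          simpa using this
        exact h1.div h2 hPs.ne'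
      rw [hds.deriv]
      have hq : 0 ≤ s ^ 2 - 3 * M * s + 2 * Q ^ 2 := by
        nlinarith [mul_nonneg (le_of_lt (sub_pos.mpr hs')) (by linarith [hDM] : (0:ℝ) ≤ s + rP - 3 * M)]
      apply div_nonneg _ (sq_nonneg _)
      have hs0 : (0:ℝ) < s := by linarith
      nlinarith [pow_pos hs0 3]
  have key : ∀ r : ℝ, rP ≤ r → deriv f r ≥ (w₂ / (r * Υ r)) * (2 * rP - r) := by
    intro r hr
    have hr2M : 2 * M < r := lt_of_lt_of_le hrP2M hr
    have hr0 : (0:ℝ) < r := by linarith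
    have hΥr := hΥpos r hr2M
    have hPr := hP r hr2M
    have hmeas : StronglyMeasurableAtFilter (fun s : ℝ => s ^ 2 / Υ s) (nhds r) :=
      hcg.stronglyMeasurableAtFilter isOpen_Ioi r hr2M
    have hctsAt : ContinuousAt (fun s : ℝ => s ^ 2 / Υ s) r :=
      hcg.continuousAt (isOpen_Ioi.mem_nhds hr2M)
    have hF : HasDerivAt (fun u => ∫ s in rP..u, s ^ 2 / Υ s) (r ^ 2 / Υ r) r :=
      intervalIntegral.integral_hasDerivAt_right (hint r hr) hmeas hctsAt
    have hz : HasDerivAt (fun u : ℝ => u ^ (-2 : ℤ)) ((-2 : ℤ) * r ^ (-2 - 1 : ℤ)) r :=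
      hasDerivAt_zpow (-2) r (Or.inl hr0.ne')
    norm_num at hz
    have hpow := hz.const_mul w₂
    have hf' : HasDerivAt f
        (w₂ * -(2 * (r ^ 3)⁻¹) * (∫ s in rP..r, s ^ 2 / Υ s)
          + w₂ * (r ^ 2)⁻¹ * (r ^ 2 / Υ r)) r := hpow.mul hF
    rw [hf'.deriv]
    have hbound : (∫ s in rP..r, s ^ 2 / Υ s) ≤ (r - rP) * r ^ 2 / Υ r := by
      have h1 : (∫ s in rP..r, s ^ 2 / Υ s) ≤ ∫ _s in rP..r, r ^ 2 / Υ r :=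
        intervalIntegral.integral_mono_on hr (hint r hr) intervalIntegrable_const
          (fun s hs => by
            have hs2M := hsub r hr hs
            rw [hgeq s hs2M, hgeq r hr2M]
            exact hmono hs.1 (mem_Ici.mpr hr) hs.2)
      simpa using h1
    have hEq : w₂ * -(2 * (r ^ 3)⁻¹) * ((r - rP) * r ^ 2 / Υ r) + w₂ * (r ^ 2)⁻¹ * (r ^ 2 / Υ r)
        = w₂ / (r * Υ r) * (2 * rP - r) := by
      field_simp
      ring
    have ha : w₂ * -(2 * (r ^ 3)⁻¹) ≤ 0 := by
      have h3 : (0:ℝ) < (r ^ 3)⁻¹ := by positivity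
      nlinarith
    have := mul_le_mul_of_nonpos_left hbound ha
    linarith
  refine ⟨key, fun r hr hr2 => lt_of_lt_of_le ?_ (key r hr)⟩
  have hr2M : 2 * M < r := lt_of_lt_of_le hrP2M hr
  have hr0 : (0:ℝ) < r := by linarith
  exact mul_pos (div_pos hw (mul_pos hr0 (hΥpos r hr2M))) (by linarith)
end

section
/- Let M > 0, |Q| < M, and r ≥ r_P. Then 5Υ² + 11Υ·(−M/r + Q²/r²) + 5(−M/r + Q²/r²)² > 0 for r ≥ r₂ = 2M + √(4M²−3Q²), where Υ = 1 − 2M/r + Q²/r². -/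
theorem stmt_14 (M Q r : ℝ) (hM : 0 < M) (hQ : |Q| < M)
    (hr : 2 * M + Real.sqrt (4 * M ^ 2 - 3 * Q ^ 2) ≤ r) :
    0 < 5 * (1 - 2 * M / r + Q ^ 2 / r ^ 2) ^ 2 +
        11 * (1 - 2 * M / r + Q ^ 2 / r ^ 2) * (-(M / r) + Q ^ 2 / r ^ 2) +
        5 * (-(M / r) + Q ^ 2 / r ^ 2) ^ 2 := by
  have hQ2 : Q ^ 2 < M ^ 2 := by
    have h := abs_lt.mp hQ
    nlinarith [h.1, h.2]
  set s := Real.sqrt (4 * M ^ 2 - 3 * Q ^ 2) with hs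
  have hs0 : 0 ≤ s := Real.sqrt_nonneg _
  have hs2 : s ^ 2 = 4 * M ^ 2 - 3 * Q ^ 2 := Real.sq_sqrt (by nlinarith)
  have hr0 : (0:ℝ) < r := by nlinarith
  have hA : 0 < r ^ 2 - 2 * M * r + Q ^ 2 := by nlinarith
  have hAB : 0 ≤ r ^ 2 - 4 * M * r + 3 * Q ^ 2 := by nlinarith
  have key : 0 < 5 * (r ^ 2 - 2 * M * r + Q ^ 2) ^ 2 +
      11 * (r ^ 2 - 2 * M * r + Q ^ 2) * (Q ^ 2 - M * r) +
      5 * (Q ^ 2 - M * r) ^ 2 := by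
    nlinarith [sq_nonneg (r ^ 2 - 4 * M * r + 3 * Q ^ 2),
      mul_nonneg hA.le hAB, mul_pos hA hA]
  have heq : 5 * (1 - 2 * M / r + Q ^ 2 / r ^ 2) ^ 2 +
        11 * (1 - 2 * M / r + Q ^ 2 / r ^ 2) * (-(M / r) + Q ^ 2 / r ^ 2) +
        5 * (-(M / r) + Q ^ 2 / r ^ 2) ^ 2 =
      (5 * (r ^ 2 - 2 * M * r + Q ^ 2) ^ 2 +
        11 * (r ^ 2 - 2 * M * r + Q ^ 2) * (Q ^ 2 - M * r) +
        5 * (Q ^ 2 - M * r) ^ 2) / r ^ 4 := by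
    field_simp
    ring
  rw [heq]
  exact div_pos key (by positivity)
end
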